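/- arXiv:2302.04731 — 2 statements merged into one kernel-verified Lean document; each statement's English description precedes it below -/
import Mathlib

section
/- Let f : ℕ → ℕ be a total computable injective function. Then the hypothesis class 𝓗_f has a computable asymptotic ERM; moreover, one can take the error sequence ε_m = 1 / min(f(ℕ) \ f({1,…,m})). -/
open Filter
open scoped ENNReal

/-- A hypothesis is a function `ℕ → Bool` (i.e. an element of `{0,1}^ℕ`). -/
abbrev Hyp := ℕ → Bool

/-- A sample is a finite sequence of labeled examples. -/
abbrev Sample := List (ℕ × Bool)

/-- A learner maps samples to hypotheses. -/
abbrev Learner := Sample → Hyp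

/-- Generalization error `L_D(h) = Pr_{(x,y)∼D}[h(x) ≠ y]`. -/
noncomputable def genError (D : PMF (ℕ × Bool)) (h : Hyp) : ℝ≥0∞ :=
  D.toOuterMeasure {p | h p.1 ≠ p.2}

/-- The distribution of `m` i.i.d. draws from `D`, as a PMF on samples of size `m`. -/
noncomputable def iidPMF (D : PMF (ℕ × Bool)) : ℕ → PMF Sample
  | 0 => PMF.pure []
  | m + 1 => D.bind fun p => (iidPMF D m).map (List.cons p)

/-- `Pr_{S ∼ D^m}[S ∈ E]`. -/
noncomputable def samplePr (D : PMF (ℕ × Bool)) (m : ℕ) (E : Set Sample) : ℝ≥0∞ :=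
  (iidPMF D m).toOuterMeasure E

/-- The PAC inequality for accuracy/confidence parameter `n` and sample size `m`:
for every distribution `D`,
`Pr_{S∼D^m}[L_D(A(S)) ≤ inf_{h∈H} L_D(h) + 1/n] ≥ 1 − 1/n`. -/
def PACCondition (A : Learner) (H : Set Hyp) (n m : ℕ) : Prop :=
  ∀ D : PMF (ℕ × Bool),
    1 - ((n : ℝ≥0∞))⁻¹ ≤
      samplePr D m {S | genError D (A S) ≤ (⨅ h ∈ H, genError D h) + ((n : ℝ≥0∞))⁻¹}

/-- `A` PAC learns `H`. -/
def PACLearns (A : Learner) (H : Set Hyp) : Prop :=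
  ∀ n : ℕ, ∃ m₀ : ℕ, ∀ m ≥ m₀, PACCondition A H n m

/-- The sample complexity of `A` w.r.t. `H`: the minimal `m₀` such that the PAC
inequality for `n` holds for all `m ≥ m₀`. -/
noncomputable def sampleComplexity (A : Learner) (H : Set Hyp) (n : ℕ) : ℕ :=
  sInf {m₀ | ∀ m ≥ m₀, PACCondition A H n m}

/-- A learner is computable if the two-argument function `(S, x) ↦ A(S)(x)` is computable
(equivalently, there is an algorithm producing from `S` a Turing machine computing the
total function `A(S)`). -/
def ComputableLearner (A : Learner) : Prop :=
  Computable₂ fun (S : Sample) (x : ℕ) => A S x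

/-- A learner is proper for `H` if it only outputs hypotheses from `H`. -/
def ProperFor (A : Learner) (H : Set Hyp) : Prop := ∀ S, A S ∈ H

/-- `H` is CPAC learnable: some computable learner PAC learns it. -/
def CPACLearnable (H : Set Hyp) : Prop :=
  ∃ A : Learner, ComputableLearner A ∧ PACLearns A H

/-- `H` is properly CPAC learnable. -/
def ProperlyCPACLearnable (H : Set Hyp) : Prop :=
  ∃ A : Learner, ComputableLearner A ∧ ProperFor A H ∧ PACLearns A H

/-- `H` is SCPAC learnable: some computable learner PAC learns it with sample complexity
bounded by a total computable function. -/
def SCPACLearnable (H : Set Hyp) : Prop :=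
  ∃ A : Learner, ComputableLearner A ∧ PACLearns A H ∧
    ∃ g : ℕ → ℕ, Computable g ∧ ∀ n, sampleComplexity A H n ≤ g n

/-- `H` is properly SCPAC learnable. -/
def ProperlySCPACLearnable (H : Set Hyp) : Prop :=
  ∃ A : Learner, ComputableLearner A ∧ ProperFor A H ∧ PACLearns A H ∧
    ∃ g : ℕ → ℕ, Computable g ∧ ∀ n, sampleComplexity A H n ≤ g n

/-- Empirical error `L_S(h) = |{i : h(x_i) ≠ y_i}| / |S|`. -/
noncomputable def empError (S : Sample) (h : Hyp) : ℝ≥0∞ :=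
  ((S.countP fun p => h p.1 != p.2 : ℕ) : ℝ≥0∞) / (S.length : ℝ≥0∞)

/-- `A` is an ERM for `H`: on every sample it outputs a hypothesis of `H` minimizing
the empirical error over `H`. -/
def IsERM (A : Learner) (H : Set Hyp) : Prop :=
  ∀ S : Sample, A S ∈ H ∧ ∀ h ∈ H, empError S (A S) ≤ empError S h

/-- `A` is an asymptotic ERM for `H`. -/
def IsAsymptoticERM (A : Learner) (H : Set Hyp) : Prop :=
  ProperFor A H ∧
  ∃ ε : ℕ → ℝ≥0∞, (∀ m, ε m ≤ 1) ∧ Tendsto ε atTop (nhds 0) ∧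
    ∀ S : Sample, empError S (A S) ≤ (⨅ h ∈ H, empError S h) + ε S.length

/-- `H` shatters the finite set `s`. -/
def Shatters (H : Set Hyp) (s : Finset ℕ) : Prop :=
  ∀ g : ℕ → Bool, ∃ h ∈ H, ∀ x ∈ s, h x = g x

/-- The VC dimension of `H` is at most `d`. -/
def VCDimAtMost (H : Set Hyp) (d : ℕ) : Prop :=
  ∀ s : Finset ℕ, Shatters H s → s.card ≤ d

/-- `H` has finite VC dimension. -/
def FiniteVCDim (H : Set Hyp) : Prop := ∃ d, VCDimAtMost H d

/-- `w` is a `k`-witness of VC dimension for `H`: on every increasing `(k+1)`-tuple it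
produces a Boolean `(k+1)`-tuple which is not the trace of any `h ∈ H` on the tuple. -/
def IsKWitness (k : ℕ) (w : List ℕ → List Bool) (H : Set Hyp) : Prop :=
  ∀ xs : List ℕ, xs.length = k + 1 → xs.Chain' (· < ·) →
    (w xs).length = k + 1 ∧ ∀ h ∈ H, xs.map h ≠ w xs

/-- The support of a hypothesis: `h⁻¹(1)`. -/
def hypSupport (h : Hyp) : Set ℕ := {x | h x = true}

/-- `h` is finitely supported. -/
def FinitelySupported (h : Hyp) : Prop := (hypSupport h).Finite

/-- The finitely supported hypothesis with support (the set of elements of) `l`. -/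
def listIndicator (l : List ℕ) : Hyp := fun x => decide (x ∈ l)

/-- A class of finitely supported hypotheses is decidable: there is an algorithm that,
given the support of a finitely supported `h` (as a list), decides whether `h ∈ H`. -/
def DecidableClass (H : Set Hyp) : Prop :=
  ∃ d : List ℕ → Bool, Computable d ∧ ∀ l : List ℕ, (d l = true ↔ listIndicator l ∈ H)

/-- `H` shatters the full binary tree of depth `d` whose node at binary path `p`
(with `|p| < d`) is labeled `t p`: every leaf (a binary path of length `d`) is reached
by some `h ∈ H`, going right at a node labeled `x` iff `h x = 1`. -/
def ShattersTree (H : Set Hyp) (d : ℕ) (t : List Bool → ℕ) : Prop :=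
  ∀ l : List Bool, l.length = d →
    ∃ h ∈ H, ∀ (i : ℕ) (hi : i < l.length), l[i] = h (t (l.take i))

/-! ### The class `𝓗_f` -/

/-- The `j`-th smallest element of the `k`-th block `I_k` of positive even numbers
(`1 ≤ j ≤ k`): `n_{kj} = k(k-1) + 2j`. -/
def nkj (k j : ℕ) : ℕ := k * (k - 1) + 2 * j

/-- The block `I_k` (of size `k`). -/
def Iblk (k : ℕ) : Finset ℕ := (Finset.Icc 1 k).image (nkj k)

/-- `h_{kj}`: the indicator of `I_k \ {n_{kj}}`. -/
def hkj (k j : ℕ) : Hyp := fun n => decide (n ∈ Iblk k ∧ n ≠ nkj k j)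

/-- `h_a`: the indicator of `I_{f(a)} ∪ {2a+1}`. -/
def hA (f : ℕ → ℕ) (a : ℕ) : Hyp := fun n => decide (n ∈ Iblk (f a) ∨ n = 2 * a + 1)

/-- The class `𝓗_f = {h_{kj} : 1 ≤ j ≤ k} ∪ {h_a : a ∈ ℕ}`. -/
def Hf (f : ℕ → ℕ) : Set Hyp :=
  {h | ∃ k j, 1 ≤ j ∧ j ≤ k ∧ h = hkj k j} ∪ {h | ∃ a, h = hA f a}

/-! ### Good hypotheses w.r.t. a witness -/

/-- `h` is good w.r.t. the `k`-witness `w`: it has finite support and disagrees with `w`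
on every increasing `(k+1)`-tuple lying strictly below `max supp(h)`. -/
def IsGood (k : ℕ) (w : List ℕ → List Bool) (h : Hyp) : Prop :=
  FinitelySupported h ∧
  ∀ xs : List ℕ, xs.length = k + 1 → xs.Chain' (· < ·) →
    (∀ x ∈ xs, x < sSup (hypSupport h)) → xs.map h ≠ w xs

/-- The set of good hypotheses w.r.t. `w`. -/
def Hgood (k : ℕ) (w : List ℕ → List Bool) : Set Hyp := {h | IsGood k w h}

/-!
The learner minimises the empirical error over the hypotheses whose codes lie below a bound read
off the sample `S` of size `m`: all `h_{kj}` with `k` up to the largest sample point, and all `h_a`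
with `a` up to the sample size and the largest sample point. Every `h_{kj}` with a larger `k`
vanishes on the sample, and so does every other `h_a` unless its block `I_{f(a)}` meets the
sample. In that case `a > m`, so `f(a) ≥ min f((m, ∞))`, and by pigeonhole some point of `I_{f(a)}`
carries at most `m / f(a)` examples; deleting it from the block gives a candidate `h_{f(a) j}`
whose empirical error exceeds that of `h_a` by at most `1 / f(a)`. For injective `f` the minimum
`min f((m, ∞))` tends to infinity with `m`.
-/

theorem Nat.pair_le_pair {a a' b b' : ℕ} (ha : a ≤ a') (hb : b ≤ b') :
    Nat.pair a b ≤ Nat.pair a' b' :=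
  calc Nat.pair a b ≤ Nat.pair a b' := hb.eq_or_lt.elim (fun h => h ▸ le_rfl)
        fun h => (Nat.pair_lt_pair_right a h).le
    _ ≤ Nat.pair a' b' := ha.eq_or_lt.elim (fun h => h ▸ le_rfl)
        fun h => (Nat.pair_lt_pair_left b' h).le

theorem Finset.exists_mul_count_le_length {α : Type*} [DecidableEq α] {s : Finset α}
    (hs : s.Nonempty) (l : List α) : ∃ x ∈ s, s.card * l.count x ≤ l.length := by
  have hsum : ∑ x ∈ s, l.count x ≤ l.length := by
    calc ∑ x ∈ s, l.count x ≤ ∑ x ∈ s ∪ l.toFinset, l.count x :=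
          Finset.sum_le_sum_of_subset Finset.subset_union_left
      _ = l.length := by
          simpa using Multiset.sum_count_eq_card (s := s ∪ l.toFinset) (m := (l : Multiset α))
            (by simp +contextual)
  refine Finset.exists_le_of_sum_le hs ?_
  rw [← Finset.mul_sum, Finset.sum_const, smul_eq_mul]
  exact Nat.mul_le_mul_left _ hsum

theorem ENNReal.natCast_div_le_inv_of_mul_le {k c m : ℕ} (h : k * c ≤ m) :
    (c : ℝ≥0∞) / m ≤ (k : ℝ≥0∞)⁻¹ := by
  rcases Nat.eq_zero_or_pos k with rfl | hk
  · simp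
  refine ENNReal.div_le_of_le_mul ?_
  calc (c : ℝ≥0∞) = (k : ℝ≥0∞)⁻¹ * (k * c) := by
        rw [← mul_assoc, ENNReal.inv_mul_cancel (by exact_mod_cast hk.ne') (by simp), one_mul]
    _ ≤ (k : ℝ≥0∞)⁻¹ * m := by gcongr; exact_mod_cast h

section Computability

variable {α β : Type*} [Primcodable α] [Primcodable β]

theorem Computable.list_countP {p : α → β → Bool} (hp : Computable₂ p) :
    Computable₂ fun (a : α) (l : List β) => l.countP (p a) := by
  have hstep : Computable₂ fun (al : α × List β) (nc : ℕ × ℕ) =>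
      nc.2 + Option.casesOn al.2[nc.1]? 0 fun b => bif p al.1 b then 1 else 0 :=
    Primrec.nat_add.to_comp.comp (Computable.snd.comp .snd) <|
      Computable.option_casesOn
        (Computable.list_getElem?.comp (Computable.snd.comp .fst) (Computable.fst.comp .snd))
        (Computable.const 0)
        (Computable.cond (hp.comp (Computable.fst.comp (Computable.fst.comp .fst)) .snd)
          (Computable.const 1) (Computable.const 0))
  refine (Computable.nat_rec (Computable.list_length.comp .snd) (Computable.const 0)
    hstep).of_eq fun ⟨a, l⟩ => ?_
  suffices ∀ n, Nat.rec (motive := fun _ => ℕ) 0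
      (fun n c => c + Option.casesOn l[n]? 0 fun b => bif p a b then 1 else 0) n =
      (l.take n).countP (p a) by
    simpa using this l.length
  intro n
  induction n with
  | zero => simp
  | succ n ih =>
    rw [List.take_add_one, List.countP_append, ← ih]
    rcases hn : l[n]? with _ | b
    · simp [hn]
    · cases hb : p a b <;> simp [hn, hb]

def argminUpTo (g : ℕ → ℕ) : ℕ → ℕ
  | 0 => 0
  | n + 1 => if g (n + 1) < g (argminUpTo g n) then n + 1 else argminUpTo g n

theorem apply_argminUpTo_le (g : ℕ → ℕ) {n c : ℕ} (hc : c ≤ n) : g (argminUpTo g n) ≤ g c := by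
  induction n with
  | zero => rw [Nat.le_zero.1 hc]; rfl
  | succ n ih =>
    rw [argminUpTo]
    rcases Nat.of_le_succ hc with hc | rfl
    · split_ifs with h
      · exact h.le.trans (ih hc)
      · exact ih hc
    · split_ifs with h
      · exact le_rfl
      · exact not_lt.1 h

theorem Computable.argminUpTo {g : α → ℕ → ℕ} {n : α → ℕ} (hg : Computable₂ g)
    (hn : Computable n) : Computable fun a => argminUpTo (g a) (n a) := by
  have hstep : Computable₂ fun (a : α) (mb : ℕ × ℕ) =>
      if g a (mb.1 + 1) < g a mb.2 then mb.1 + 1 else mb.2 :=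
    (Computable.cond
      (Primrec.nat_lt.decide.to_comp.comp
        (hg.comp .fst (Primrec.succ.to_comp.comp (Computable.fst.comp .snd)))
        (hg.comp .fst (Computable.snd.comp .snd)))
      (Primrec.succ.to_comp.comp (Computable.fst.comp .snd)) (Computable.snd.comp .snd)).of_eq
      fun _ => Bool.cond_decide _ _ _
  refine (Computable.nat_rec hn (Computable.const 0) hstep).of_eq fun a => ?_
  induction n a with
  | zero => rfl
  | succ n ih => simp only [ih]; rfl

end Computability

section Blocks

theorem nkj_injective (k : ℕ) : Function.Injective (nkj k) := fun i j h => by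
  simp only [nkj] at h
  omega

theorem card_Iblk (k : ℕ) : (Iblk k).card = k := by
  rw [Iblk, Finset.card_image_of_injective _ (nkj_injective k), Nat.card_Icc, Nat.add_sub_cancel]

theorem lt_of_mem_Iblk {k x : ℕ} (hx : x ∈ Iblk k) : k < x := by
  obtain ⟨j, hj, rfl⟩ := Finset.mem_image.1 hx
  rcases k with _ | k
  · simp at hj
  · simp only [nkj, Finset.mem_Icc, Nat.add_sub_cancel] at hj ⊢
    nlinarith

theorem notMem_Iblk_of_le {k x : ℕ} (hx : x ≤ k) : x ∉ Iblk k :=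
  fun h => (lt_of_mem_Iblk h).not_ge hx

theorem hkj_eq_false_of_le {k j x : ℕ} (hx : x ≤ k) : hkj k j x = false := by
  simp [hkj, notMem_Iblk_of_le hx]

theorem mem_Iblk_iff {k x : ℕ} :
    x ∈ Iblk k ↔ x % 2 = 0 ∧ k * (k - 1) + 2 ≤ x ∧ x ≤ k * (k - 1) + 2 * k := by
  obtain ⟨r, hr⟩ := Nat.even_mul_pred_self k
  simp only [Iblk, Finset.mem_image, Finset.mem_Icc, nkj]
  constructor
  · rintro ⟨j, hj, rfl⟩
    omega
  · rintro ⟨h1, h2, h3⟩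
    exact ⟨(x - k * (k - 1)) / 2, by omega, by omega⟩

theorem primrecRel_mem_Iblk : PrimrecRel fun k x => x ∈ Iblk k := by
  have hbase : Primrec fun q : ℕ × ℕ => q.1 * (q.1 - 1) :=
    Primrec.nat_mul.comp .fst (Primrec.nat_sub.comp .fst (.const 1))
  refine (PrimrecPred.and
    (Primrec.eq.comp (Primrec.nat_mod.comp .snd (.const 2)) (.const 0))
    (PrimrecPred.and (Primrec.nat_le.comp (Primrec.nat_add.comp hbase (.const 2)) .snd)
      (Primrec.nat_le.comp .snd (Primrec.nat_add.comp hbase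
        (Primrec.nat_mul.comp (.const 2) .fst))))).of_eq fun q => mem_Iblk_iff.symm

theorem primrec_hkj : Primrec₂ fun (kj : ℕ × ℕ) (x : ℕ) => hkj kj.1 kj.2 x :=
  (PrimrecPred.and (primrecRel_mem_Iblk.comp (Primrec.fst.comp .fst) .snd)
    (Primrec.eq.comp .snd (Primrec.nat_add.comp
      (Primrec.nat_mul.comp (Primrec.fst.comp .fst)
        (Primrec.nat_sub.comp (Primrec.fst.comp .fst) (.const 1)))
      (Primrec.nat_mul.comp (.const 2) (Primrec.snd.comp .fst)))).not).decide

theorem computable_hA {f : ℕ → ℕ} (hf : Computable f) : Computable₂ (hA f) := by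
  have hprim : PrimrecPred fun q : ℕ × ℕ × ℕ => q.2.2 ∈ Iblk q.1 ∨ q.2.2 = 2 * q.2.1 + 1 :=
    PrimrecPred.or (primrecRel_mem_Iblk.comp .fst (Primrec.snd.comp .snd))
      (Primrec.eq.comp (Primrec.snd.comp .snd)
        (Primrec.succ.comp (Primrec.nat_mul.comp (.const 2) (Primrec.fst.comp .snd))))
  exact (hprim.decide.to_comp.comp ((hf.comp .fst).pair .id)).of_eq fun _ => rfl

end Blocks

section Codes

variable (f : ℕ → ℕ)

/-- `⟪0, ⟪k, i⟫⟫` codes `h_{k+1, (i mod (k+1)) + 1}` and `⟪t + 1, a⟫` codes `h_a`; the `mod` makes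
every natural number code a member of `𝓗_f`. -/
def decodeHf (c : ℕ) : Hyp :=
  if c.unpair.1 = 0 then
    hkj (c.unpair.2.unpair.1 + 1) (c.unpair.2.unpair.2 % (c.unpair.2.unpair.1 + 1) + 1)
  else hA f c.unpair.2

theorem decodeHf_mem (c : ℕ) : decodeHf f c ∈ Hf f := by
  unfold decodeHf
  split_ifs
  · exact Or.inl ⟨_, _, le_add_self, Nat.succ_le_of_lt (Nat.mod_lt _ (Nat.succ_pos _)), rfl⟩
  · exact Or.inr ⟨_, rfl⟩

theorem decodeHf_pair_zero {k j : ℕ} (hj : 1 ≤ j) (hjk : j ≤ k) :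
    decodeHf f (Nat.pair 0 (Nat.pair (k - 1) (j - 1))) = hkj k j := by
  simp only [decodeHf, Nat.unpair_pair, if_true, Nat.sub_add_cancel (hj.trans hjk),
    Nat.mod_eq_of_lt (show j - 1 < k by omega), Nat.sub_add_cancel hj]

theorem decodeHf_pair_one (a : ℕ) : decodeHf f (Nat.pair 1 a) = hA f a := by
  simp [decodeHf]

variable {f}

theorem computable_decodeHf (hf : Computable f) : Computable₂ (decodeHf f) := by
  have hkjCode : Primrec fun q : ℕ × ℕ => (q.1.unpair.2.unpair.1 + 1,
      q.1.unpair.2.unpair.2 % (q.1.unpair.2.unpair.1 + 1) + 1) :=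
    have hk := Primrec.succ.comp (Primrec.fst.comp (Primrec.unpair.comp
      (Primrec.snd.comp (Primrec.unpair.comp .fst))))
    hk.pair (Primrec.succ.comp (Primrec.nat_mod.comp (Primrec.snd.comp (Primrec.unpair.comp
      (Primrec.snd.comp (Primrec.unpair.comp .fst)))) hk))
  refine (Computable.cond
    (Primrec.eq.comp (Primrec.fst.comp (Primrec.unpair.comp .fst)) (.const 0)).decide.to_comp
    (primrec_hkj.comp hkjCode .snd).to_comp
    ((computable_hA hf).comp (Computable.snd.comp (Primrec.unpair.to_comp.comp .fst)) .snd)).of_eq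
    fun q => ?_
  simp only [decodeHf, Bool.cond_decide]
  split_ifs <;> rfl

end Codes

section EmpiricalError

def mistakes (S : Sample) (h : Hyp) : ℕ := S.countP fun p => h p.1 != p.2

variable {S : Sample} {h₁ h₂ : Hyp}

theorem empError_eq_mistakes_div (S : Sample) (h : Hyp) :
    empError S h = (mistakes S h : ℝ≥0∞) / S.length := rfl

theorem empError_le_one (S : Sample) (h : Hyp) : empError S h ≤ 1 :=
  ENNReal.div_le_of_le_mul (by rw [one_mul]; exact_mod_cast List.countP_le_length)

theorem empError_le_empError (h : mistakes S h₁ ≤ mistakes S h₂) :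
    empError S h₁ ≤ empError S h₂ :=
  ENNReal.div_le_div_right (by exact_mod_cast h) _

theorem mistakes_congr (h : ∀ p ∈ S, h₁ p.1 = h₂ p.1) : mistakes S h₁ = mistakes S h₂ :=
  List.countP_congr fun p hp => by rw [h p hp]

theorem mistakes_le_add_count {x₀ : ℕ} (h : ∀ p ∈ S, p.1 ≠ x₀ → h₁ p.1 = h₂ p.1) :
    mistakes S h₁ ≤ mistakes S h₂ + (S.map Prod.fst).count x₀ := by
  induction S with
  | nil => simp [mistakes]
  | cons q S ih =>
    have hq := h q List.mem_cons_self
    have ih := ih fun p hp => h p (List.mem_cons_of_mem q hp)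
    simp only [mistakes, List.countP_cons, List.map_cons, List.count_cons] at ih ⊢
    by_cases hx : q.1 = x₀
    · simp only [hx, beq_self_eq_true, if_true]
      split_ifs <;> omega
    · rw [hq hx]
      simp only [hx, beq_iff_eq, if_false]
      split_ifs <;> omega

end EmpiricalError

/-- Off `2a+1`, the hypotheses `h_{f(a) j}` and `h_a` differ only at `n_{f(a) j}`; taking for it the
least-sampled point of the block `I_{f(a)}` costs at most `m / f(a)` extra mistakes. -/
theorem exists_empError_hkj_le {f : ℕ → ℕ} {a : ℕ} {S : Sample} (ha : 1 ≤ f a)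
    (hS : ∀ p ∈ S, p.1 ≠ 2 * a + 1) :
    ∃ j, 1 ≤ j ∧ j ≤ f a ∧ empError S (hkj (f a) j) ≤ empError S (hA f a) + (f a : ℝ≥0∞)⁻¹ := by
  have hne : (Iblk (f a)).Nonempty := Finset.card_pos.1 (by rw [card_Iblk]; exact ha)
  obtain ⟨x, hx, hcount⟩ := Finset.exists_mul_count_le_length hne (S.map Prod.fst)
  rw [card_Iblk, List.length_map] at hcount
  obtain ⟨j, hj, rfl⟩ := Finset.mem_image.1 hx
  rw [Finset.mem_Icc] at hj
  have hmis : mistakes S (hkj (f a) j) ≤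
      mistakes S (hA f a) + (S.map Prod.fst).count (nkj (f a) j) :=
    mistakes_le_add_count fun p hp hpj => by simp [hkj, hA, hpj, hS p hp]
  refine ⟨j, hj.1, hj.2, ?_⟩
  calc empError S (hkj (f a) j)
      ≤ ((mistakes S (hA f a) + (S.map Prod.fst).count (nkj (f a) j) : ℕ) : ℝ≥0∞) / S.length :=
        ENNReal.div_le_div_right (by exact_mod_cast hmis) _
    _ ≤ empError S (hA f a) + (f a : ℝ≥0∞)⁻¹ := by
        rw [Nat.cast_add, ENNReal.add_div, ← empError_eq_mistakes_div]
        gcongr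
        exact ENNReal.natCast_div_le_inv_of_mul_le hcount

/-- For injective `f` this is `min (f(ℕ) \ f({0,…,m}))`. It tends to infinity, whereas
`min (f(ℕ) \ f({1,…,m})) ≤ f 0`, so only the former can serve as the error sequence. -/
noncomputable def minValueAfter (f : ℕ → ℕ) (m : ℕ) : ℕ := sInf (f '' Set.Ioi m)

theorem minValueAfter_le {f : ℕ → ℕ} {m a : ℕ} (h : m < a) : minValueAfter f m ≤ f a :=
  Nat.sInf_le ⟨a, h, rfl⟩

theorem tendsto_minValueAfter {f : ℕ → ℕ} (hf : Function.Injective f) :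
    Tendsto (minValueAfter f) atTop atTop := by
  refine tendsto_atTop.2 fun K => ?_
  obtain ⟨N, hN⟩ := eventually_atTop.1 (tendsto_atTop.1 hf.nat_tendsto_atTop K)
  refine eventually_atTop.2 ⟨N, fun m hm => ?_⟩
  refine le_csInf ⟨f (m + 1), m + 1, Nat.lt_succ_self m, rfl⟩ ?_
  rintro _ ⟨a, ha, rfl⟩
  exact hN a (hm.trans (Set.mem_Ioi.1 ha).le)

theorem sInf_range_sdiff_image_Icc_le_minValueAfter {f : ℕ → ℕ} (hf : Function.Injective f)
    (m : ℕ) : sInf (Set.range f \ f '' Set.Icc 1 m) ≤ minValueAfter f m := by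
  refine csInf_le_csInf (OrderBot.bddBelow _) ⟨f (m + 1), m + 1, Nat.lt_succ_self m, rfl⟩ ?_
  rintro _ ⟨a, ha, rfl⟩
  refine ⟨⟨a, rfl⟩, ?_⟩
  rintro ⟨b, hb, hba⟩
  rw [hf hba] at hb
  exact (Set.mem_Ioi.1 ha).not_ge hb.2

section Learner

def sampleBound (S : Sample) : ℕ := S.length + (S.map Prod.fst).sum

theorem fst_le_sampleBound {S : Sample} {p : ℕ × Bool} (hp : p ∈ S) : p.1 ≤ sampleBound S :=
  (List.le_sum_of_mem (List.mem_map_of_mem hp)).trans le_add_self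

def codeBound (S : Sample) : ℕ := Nat.pair 1 (Nat.pair (sampleBound S) (sampleBound S))

theorem primrec_codeBound : Primrec codeBound := by
  have hsum : Primrec fun S : Sample => (S.map Prod.fst).sum :=
    (Primrec.list_foldr (Primrec.list_map .id (Primrec.fst.comp .snd).to₂) (.const 0)
      (Primrec.nat_add.comp (Primrec.fst.comp .snd) (Primrec.snd.comp .snd)).to₂).of_eq
      fun S => List.sum_eq_foldr.symm
  have hK : Primrec sampleBound := Primrec.nat_add.comp .list_length hsum
  exact Primrec₂.natPair.comp (.const 1) (Primrec₂.natPair.comp hK hK)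

theorem pair_zero_le_codeBound {S : Sample} {k j : ℕ} (hj : 1 ≤ j) (hjk : j ≤ k)
    (hk : k ≤ sampleBound S + 1) : Nat.pair 0 (Nat.pair (k - 1) (j - 1)) ≤ codeBound S :=
  Nat.pair_le_pair zero_le_one (Nat.pair_le_pair (by omega) (by omega))

theorem pair_one_le_codeBound {S : Sample} {a : ℕ} (ha : a ≤ sampleBound S) :
    Nat.pair 1 a ≤ codeBound S :=
  Nat.pair_le_pair le_rfl (ha.trans (Nat.left_le_pair _ _))

variable (f : ℕ → ℕ)

def hfLearner : Learner := fun S =>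
  decodeHf f (argminUpTo (fun c => mistakes S (decodeHf f c)) (codeBound S))

theorem hfLearner_mem (S : Sample) : hfLearner f S ∈ Hf f := decodeHf_mem f _

theorem mistakes_hfLearner_le {S : Sample} {c : ℕ} (hc : c ≤ codeBound S) :
    mistakes S (hfLearner f S) ≤ mistakes S (decodeHf f c) :=
  apply_argminUpTo_le (fun c => mistakes S (decodeHf f c)) hc

theorem exists_code_mistakes_eq_of_vanishing {S : Sample} {h : Hyp}
    (hh : ∀ p ∈ S, h p.1 = false) :
    ∃ c ≤ codeBound S, mistakes S (decodeHf f c) = mistakes S h := by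
  refine ⟨_, pair_zero_le_codeBound le_rfl le_add_self le_rfl, ?_⟩
  rw [decodeHf_pair_zero f le_rfl le_add_self]
  exact mistakes_congr fun p hp => by
    rw [hh p hp, hkj_eq_false_of_le ((fst_le_sampleBound hp).trans (Nat.le_succ _))]

variable {f}

theorem computable_hfLearner (hf : Computable f) : ComputableLearner (hfLearner f) := by
  have hwrong : Computable₂ fun (c : ℕ) (q : ℕ × Bool) => decodeHf f c q.1 != q.2 :=
    Primrec.not.to_comp.comp (Primrec.beq.to_comp.comp
      ((computable_decodeHf hf).comp .fst (Computable.fst.comp .snd)) (Computable.snd.comp .snd))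
  have hmis : Computable₂ fun (S : Sample) (c : ℕ) => mistakes S (decodeHf f c) :=
    (Computable.list_countP hwrong).comp .snd .fst
  have hcode : Computable fun S => argminUpTo (fun c => mistakes S (decodeHf f c)) (codeBound S) :=
    Computable.argminUpTo hmis primrec_codeBound.to_comp
  exact (computable_decodeHf hf).comp (hcode.comp .fst) .snd

theorem exists_code_empError_le {S : Sample} {h : Hyp} (hh : h ∈ Hf f) :
    ∃ c ≤ codeBound S,
      empError S (decodeHf f c) ≤ empError S h + (minValueAfter f S.length : ℝ≥0∞)⁻¹ := by
  have hS : ∀ p ∈ S, p.1 ≤ sampleBound S := fun _ => fst_le_sampleBound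
  have of_vanishing (hv : ∀ p ∈ S, h p.1 = false) : ∃ c ≤ codeBound S,
      empError S (decodeHf f c) ≤ empError S h + (minValueAfter f S.length : ℝ≥0∞)⁻¹ := by
    obtain ⟨c, hc, hmis⟩ := exists_code_mistakes_eq_of_vanishing f hv
    exact ⟨c, hc, (empError_le_empError hmis.le).trans le_self_add⟩
  rcases hh with ⟨k, j, hj, hjk, rfl⟩ | ⟨a, rfl⟩
  · by_cases hk : k ≤ sampleBound S + 1
    · refine ⟨_, pair_zero_le_codeBound hj hjk hk, ?_⟩
      rw [decodeHf_pair_zero f hj hjk]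
      exact le_self_add
    · exact of_vanishing fun p hp => hkj_eq_false_of_le (by have := hS p hp; omega)
  by_cases ha : a ≤ sampleBound S
  · exact ⟨_, pair_one_le_codeBound ha, by rw [decodeHf_pair_one]; exact le_self_add⟩
  have h2a : ∀ p ∈ S, p.1 ≠ 2 * a + 1 := fun p hp => by have := hS p hp; omega
  by_cases hfa : 1 ≤ f a ∧ f a ≤ sampleBound S + 1
  · obtain ⟨j, hj, hjk, herr⟩ := exists_empError_hkj_le hfa.1 h2a
    refine ⟨_, pair_zero_le_codeBound hj hjk hfa.2, ?_⟩
    rw [decodeHf_pair_zero f hj hjk]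
    have hlen : S.length < a := lt_of_le_of_lt le_self_add (not_le.1 ha)
    refine herr.trans ?_
    gcongr
    exact minValueAfter_le hlen
  · refine of_vanishing fun p hp => ?_
    have hpK := hS p hp
    have hblk : p.1 ∉ Iblk (f a) := by
      rcases Nat.eq_zero_or_pos (f a) with h0 | _
      · simp [h0, Iblk]
      · exact notMem_Iblk_of_le (by omega)
    simp [hA, hblk, h2a p hp]

theorem empError_hfLearner_le (S : Sample) :
    empError S (hfLearner f S) ≤
      (⨅ h ∈ Hf f, empError S h) + (minValueAfter f S.length : ℝ≥0∞)⁻¹ := by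
  simp only [ENNReal.iInf_add]
  refine le_iInf₂ fun h hh => ?_
  obtain ⟨c, hc, herr⟩ := exists_code_empError_le hh
  exact (empError_le_empError (mistakes_hfLearner_le f hc)).trans herr

end Learner

/-- For a total computable injective `f : ℕ → ℕ`, the class `𝓗_f`
has a computable asymptotic ERM; moreover, one can take the error sequence
`ε_m = 1 / min (f(ℕ) \ f({1,…,m}))`. -/
theorem Hf_computable_asymptoticERM (f : ℕ → ℕ) (hf : Computable f)
    (hinj : Function.Injective f) :
    ∃ A : Learner, ComputableLearner A ∧ IsAsymptoticERM A (Hf f) ∧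
      ∀ S : Sample, empError S (A S) ≤ (⨅ h ∈ Hf f, empError S h) +
        ((sInf (Set.range f \ f '' Set.Icc 1 S.length) : ℕ) : ℝ≥0∞)⁻¹ := by
  set ε : ℕ → ℝ≥0∞ := fun m => min 1 (minValueAfter f m : ℝ≥0∞)⁻¹
  have hε : Tendsto ε atTop (nhds 0) :=
    tendsto_of_tendsto_of_tendsto_of_le_of_le tendsto_const_nhds
      (ENNReal.tendsto_inv_nat_nhds_zero.comp (tendsto_minValueAfter hinj))
      (fun _ => zero_le) fun _ => min_le_right _ _
  refine ⟨hfLearner f, computable_hfLearner hf, ⟨hfLearner_mem f, ε, fun _ => min_le_left _ _,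
    hε, fun S => ?_⟩, fun S => ?_⟩
  · rw [← min_add_add_left]
    exact le_min ((empError_le_one S _).trans le_add_self) (empError_hfLearner_le S)
  · refine (empError_hfLearner_le S).trans ?_
    gcongr
    exact sInf_range_sdiff_image_Icc_le_minValueAfter hinj S.length
end

section
/- Let f : ℕ → ℕ be a total computable injective function. If the hypothesis class 𝓗_f has a computable ERM, then the range f(ℕ) is a decidable subset of ℕ. Consequently, if f(ℕ) is undecidable, 𝓗_f is not properly SCPAC learnable. -/
open Filter
open scoped ENNReal

/-!
For `k ≥ 1` let `S_k` be the sample labelling every point of the block `I_k` positively. A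
hypothesis of `𝓗_f` is consistent with `S_k` only if it is `h_a` with `f a = k`: every `h_{k'j}`
and every other `h_a` misses a point of `I_k`. Hence `k ∈ f(ℕ)` iff some hypothesis of `𝓗_f` is
consistent with `S_k`, and an ERM finds one whenever one exists, so running it on `S_k` decides
`k ∈ f(ℕ)`.

A proper PAC learner whose sample complexity is bounded by a computable `g` decides the same
question: under the uniform distribution on `S_k` every point has mass at least `1/k`, and the
class is realizable when `k ∈ f(ℕ)`, so with accuracy `1/(k+1)` some sample of size `g (k+1)`
drawn from `S_k` makes the learner consistent with `S_k`. There are finitely many such samples,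
and a consistent output for any of them is a hypothesis of `𝓗_f` consistent with `S_k`.
-/

def tuples {α : Type*} : ℕ → List α → List (List α)
  | 0, _ => [[]]
  | m + 1, l => (tuples m l).flatMap fun t => l.map (· :: t)

theorem mem_tuples {α : Type*} {m : ℕ} {l t : List α} :
    t ∈ tuples m l ↔ t.length = m ∧ ∀ x ∈ t, x ∈ l := by
  induction m generalizing t with
  | zero => cases t <;> simp [tuples]
  | succ m ih =>
    cases t with
    | nil => simp [tuples]
    | cons a t => simp [tuples, ih, and_comm, and_left_comm, and_assoc]

theorem primrec₂_tuples {α : Type} [Primcodable α] : Primrec₂ (@tuples α) := by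
  have step : Primrec₂ fun (x : ℕ × List α) (y : ℕ × List (List α)) =>
      y.2.flatMap fun t => x.2.map (· :: t) :=
    Primrec.list_flatMap (Primrec.snd.comp Primrec.snd) <|
      (Primrec.list_map (Primrec.snd.comp (Primrec.fst.comp Primrec.fst))
        (Primrec.list_cons.comp Primrec.snd (Primrec.snd.comp Primrec.fst)).to₂).to₂
  refine (Primrec.nat_rec' Primrec.fst (Primrec.const [[]]) step).of_eq fun x => ?_
  obtain ⟨m, l⟩ := x
  induction m with
  | zero => rfl
  | succ m ih => simp [tuples, ← ih]

namespace Computable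

variable {α β : Type} [Primcodable α] [Primcodable β]

theorem range_all {n : α → ℕ} {q : α → ℕ → Bool} (hn : Computable n) (hq : Computable₂ q) :
    Computable fun a => (List.range (n a)).all (q a) := by
  refine (nat_rec hn (const true) (Primrec.and.to_comp.comp (snd.comp snd)
    (hq.comp fst (fst.comp snd))).to₂).of_eq fun a => ?_
  induction n a with
  | zero => rfl
  | succ k ih => simp [List.range_succ, ih]

theorem list_all [Inhabited β] {l : α → List β} {p : α → β → Bool} (hl : Computable l)
    (hp : Computable₂ p) : Computable fun a => (l a).all (p a) := by
  refine (range_all (list_length.comp hl) (hp.comp fst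
    ((Primrec.list_getD default).to_comp.comp (hl.comp fst) snd)).to₂).of_eq fun a => ?_
  refine Bool.eq_iff_iff.mpr ?_
  simp only [List.all_eq_true, List.mem_range]
  constructor
  · intro h b hb
    obtain ⟨i, hi, rfl⟩ := List.mem_iff_getElem.mp hb
    simpa only [List.getD_eq_getElem _ _ hi] using h i hi
  · intro h i hi
    simpa only [List.getD_eq_getElem _ _ hi] using h _ (List.getElem_mem hi)

theorem list_any [Inhabited β] {l : α → List β} {p : α → β → Bool} (hl : Computable l)
    (hp : Computable₂ p) : Computable fun a => (l a).any (p a) :=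
  (Primrec.not.to_comp.comp (list_all hl (Primrec.not.to_comp.comp hp).to₂)).of_eq fun a => by
    rw [← List.not_any_eq_all_not, Bool.not_not]

end Computable

theorem ComputablePred.of_bool_iff_of_pos {p : ℕ → Prop} {b : ℕ → Bool} (hb : Computable b)
    (h : ∀ k, 1 ≤ k → (b k = true ↔ p k)) : ComputablePred p := by
  classical
  refine ComputablePred.computable_iff.mpr
    ⟨fun n => Nat.casesOn (motive := fun _ => Bool) n (decide (p 0)) fun k => b (k + 1),
    Computable.nat_casesOn Computable.id (Computable.const _)
      (hb.comp (Computable.succ.comp Computable.snd)).to₂, funext fun n => ?_⟩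
  cases n with
  | zero => simp
  | succ k => simpa using (h (k + 1) (by omega)).symm

def Consistent (S : Sample) (h : Hyp) : Prop := ∀ p ∈ S, h p.1 = p.2

theorem consistent_iff_all_beq {S : Sample} {h : Hyp} :
    Consistent S h ↔ (S.all fun p => h p.1 == p.2) = true := by
  simp [Consistent]

theorem empError_eq_zero_iff {S : Sample} {h : Hyp} : empError S h = 0 ↔ Consistent S h := by
  simp [empError, ENNReal.div_eq_zero_iff, List.countP_eq_zero, Consistent]

theorem IsERM.consistent_iff {A : Learner} {H : Set Hyp} (hA : IsERM A H) (S : Sample) :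
    Consistent S (A S) ↔ ∃ h ∈ H, Consistent S h := by
  refine ⟨fun hS => ⟨A S, (hA S).1, hS⟩, fun ⟨h, hH, hS⟩ => ?_⟩
  rw [← empError_eq_zero_iff] at hS ⊢
  exact le_antisymm (hS ▸ (hA S).2 h hH) zero_le

theorem genError_eq_zero_iff {D : PMF (ℕ × Bool)} {h : Hyp} :
    genError D h = 0 ↔ ∀ p ∈ D.support, h p.1 = p.2 := by
  simp [genError, PMF.toOuterMeasure_apply_eq_zero_iff, Set.disjoint_left]

theorem apply_le_genError {D : PMF (ℕ × Bool)} {h : Hyp} {p : ℕ × Bool} (hp : h p.1 ≠ p.2) :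
    D p ≤ genError D h := by
  rw [← PMF.toOuterMeasure_apply_singleton]
  exact D.toOuterMeasure.mono (Set.singleton_subset_iff.mpr hp)

theorem mem_support_iidPMF {D : PMF (ℕ × Bool)} {m : ℕ} {S : Sample}
    (hS : S ∈ (iidPMF D m).support) : S.length = m ∧ ∀ p ∈ S, p ∈ D.support := by
  induction m generalizing S with
  | zero => simp_all [iidPMF]
  | succ m ih =>
    simp only [iidPMF, PMF.mem_support_bind_iff, PMF.mem_support_map_iff] at hS
    obtain ⟨p, hp, S, hS, rfl⟩ := hS
    obtain ⟨hlen, hsupp⟩ := ih hS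
    refine ⟨by simp [hlen], fun q hq => ?_⟩
    rcases List.mem_cons.mp hq with rfl | hq
    exacts [hp, hsupp q hq]

theorem PACLearns.pacCondition {A : Learner} {H : Set Hyp} (hA : PACLearns A H) {n m : ℕ}
    (hm : sampleComplexity A H n ≤ m) : PACCondition A H n m :=
  Nat.sInf_mem (hA n) m hm

theorem PACCondition.exists_mem_support_genError_le {A : Learner} {H : Set Hyp} {n m : ℕ}
    (hA : PACCondition A H n m) (hn : 2 ≤ n) (D : PMF (ℕ × Bool)) {h : Hyp} (hH : h ∈ H)
    (hD : genError D h = 0) : ∃ S ∈ (iidPMF D m).support, genError D (A S) ≤ (n : ℝ≥0∞)⁻¹ := by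
  have hinf : ⨅ h ∈ H, genError D h = 0 := le_antisymm (hD ▸ iInf₂_le h hH) zero_le
  have hpos : (0 : ℝ≥0∞) < 1 - (n : ℝ≥0∞)⁻¹ :=
    tsub_pos_of_lt (ENNReal.inv_lt_one.mpr (by exact_mod_cast hn))
  have hev := (hpos.trans_le (hA D)).ne'
  rw [samplePr, hinf, zero_add, Ne, PMF.toOuterMeasure_apply_eq_zero_iff,
    Set.not_disjoint_iff] at hev
  exact hev

theorem consistent_of_genError_ofMultiset_lt {S₀ : Sample} (hS₀ : (S₀ : Multiset (ℕ × Bool)) ≠ 0)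
    {h : Hyp} (hh : genError (PMF.ofMultiset S₀ hS₀) h < (S₀.length : ℝ≥0∞)⁻¹) :
    Consistent S₀ h := by
  intro p hp
  by_contra hne
  refine (apply_le_genError hne).not_gt (hh.trans_le ?_)
  rw [PMF.ofMultiset_apply, Multiset.coe_card, div_eq_mul_inv]
  -- `PMF.ofMultiset_apply` counts with the classical decidable equality.
  exact le_mul_of_one_le_left zero_le
    (by exact_mod_cast (@Multiset.one_le_count_iff_mem _ (Classical.decEq _) _ _).mpr hp)

theorem ProperFor.exists_consistent_iff {A : Learner} {H : Set Hyp} (hA : ProperFor A H)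
    {n m : ℕ} (hPAC : PACCondition A H n m) {S₀ : Sample} (hne : S₀ ≠ []) (hlen : S₀.length < n) :
    (∃ h ∈ H, Consistent S₀ h) ↔ ∃ S ∈ tuples m S₀, Consistent S₀ (A S) := by
  refine ⟨fun ⟨h, hH, hS₀⟩ => ?_, fun ⟨S, _, hS⟩ => ⟨A S, hA S, hS⟩⟩
  have hS₀ne : (S₀ : Multiset (ℕ × Bool)) ≠ 0 := by simpa using hne
  set D := PMF.ofMultiset (S₀ : Multiset (ℕ × Bool)) hS₀ne
  have hD : genError D h = 0 := genError_eq_zero_iff.mpr fun p hp =>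
    hS₀ p (by simpa [D, PMF.support_ofMultiset] using hp)
  obtain ⟨S, hsupp, hS⟩ := hPAC.exists_mem_support_genError_le
    (by have := List.length_pos_iff.mpr hne; omega) D hH hD
  obtain ⟨hSlen, hSD⟩ := mem_support_iidPMF hsupp
  refine ⟨S, mem_tuples.mpr ⟨hSlen, fun p hp => ?_⟩,
    consistent_of_genError_ofMultiset_lt (S₀ := S₀) hS₀ne ?_⟩
  · simpa [D, PMF.support_ofMultiset] using hSD p hp
  · exact hS.trans_lt (ENNReal.inv_lt_inv.mpr (by exact_mod_cast hlen))

theorem nkj_lt_nkj {k j k' j' : ℕ} (hjk : j ≤ k) (hj' : 1 ≤ j') (hk : k < k') :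
    nkj k j < nkj k' j' := by
  obtain ⟨d, rfl⟩ := Nat.exists_eq_add_of_lt hk
  have hle : nkj k j ≤ k * (k + 1) := by
    have : k * (k - 1) + 2 * k = k * (k + 1) := by cases k <;> simp; ring
    unfold nkj; omega
  have hgt : k * (k + 1) < nkj (k + d + 1) j' := by
    simp only [nkj, show k + d + 1 - 1 = k + d by omega]
    nlinarith
  exact hle.trans_lt hgt

theorem eq_of_nkj_mem_Iblk {k j k' : ℕ} (hj : 1 ≤ j) (hjk : j ≤ k) (h : nkj k j ∈ Iblk k') :
    k = k' := by
  obtain ⟨j', hj'k', he⟩ := Finset.mem_image.mp h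
  obtain ⟨hj', hjk'⟩ := Finset.mem_Icc.mp hj'k'
  by_contra hne
  rcases Nat.lt_or_gt_of_ne hne with hlt | hlt
  · exact (nkj_lt_nkj hjk hj' hlt).ne he.symm
  · exact (nkj_lt_nkj hjk' hj hlt).ne he

theorem nkj_ne_two_mul_add_one (k j a : ℕ) : nkj k j ≠ 2 * a + 1 := by
  obtain ⟨c, hc⟩ := Nat.even_mul_pred_self k
  unfold nkj; omega

def blockSample (k : ℕ) : Sample := (List.range k).map fun j => (nkj k (j + 1), true)

theorem primrec_blockSample : Primrec blockSample :=
  Primrec.list_map Primrec.list_range <| (Primrec.pair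
    (Primrec.nat_add.comp (Primrec.nat_mul.comp Primrec.fst (Primrec.nat_sub.comp Primrec.fst
      (Primrec.const 1))) (Primrec.nat_mul.comp (Primrec.const 2) (Primrec.succ.comp Primrec.snd)))
    (Primrec.const true)).to₂

theorem blockSample_ne_nil {k : ℕ} (hk : 1 ≤ k) : blockSample k ≠ [] := by
  simp [blockSample]; omega

theorem length_blockSample (k : ℕ) : (blockSample k).length = k := by
  simp [blockSample]

theorem consistent_blockSample_iff {k : ℕ} {h : Hyp} :
    Consistent (blockSample k) h ↔ ∀ j, 1 ≤ j → j ≤ k → h (nkj k j) = true := by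
  simp only [Consistent, blockSample, List.forall_mem_map, List.mem_range]
  exact ⟨fun H j hj hjk => by simpa [Nat.sub_add_cancel hj] using H (j - 1) (by omega),
    fun H j hj => H (j + 1) (by omega) hj⟩

theorem consistent_blockSample_hA {f : ℕ → ℕ} {a : ℕ} :
    Consistent (blockSample (f a)) (hA f a) :=
  consistent_blockSample_iff.mpr fun _ hj hjk =>
    decide_eq_true (Or.inl (Finset.mem_image_of_mem (nkj (f a)) (Finset.mem_Icc.mpr ⟨hj, hjk⟩)))

theorem not_consistent_blockSample {f : ℕ → ℕ} {k : ℕ} (hk : 1 ≤ k) (hkf : k ∉ Set.range f)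
    {h : Hyp} (hh : h ∈ Hf f) : ¬ Consistent (blockSample k) h := by
  rw [consistent_blockSample_iff]
  intro H
  rcases hh with ⟨k', j', hj', hjk', rfl⟩ | ⟨a, rfl⟩
  · have h1 : nkj k 1 ∈ Iblk k' ∧ nkj k 1 ≠ nkj k' j' := by simpa [hkj] using H 1 le_rfl hk
    obtain rfl := eq_of_nkj_mem_Iblk le_rfl hk h1.1
    simpa [hkj] using H j' hj' hjk'
  · have h1 : nkj k 1 ∈ Iblk (f a) := by simpa [hA, nkj_ne_two_mul_add_one] using H 1 le_rfl hk
    exact hkf ⟨a, (eq_of_nkj_mem_Iblk le_rfl hk h1).symm⟩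

theorem mem_range_iff_exists_consistent_blockSample {f : ℕ → ℕ} {k : ℕ} (hk : 1 ≤ k) :
    k ∈ Set.range f ↔ ∃ h ∈ Hf f, Consistent (blockSample k) h := by
  refine ⟨fun ⟨a, ha⟩ => ⟨hA f a, Or.inr ⟨a, rfl⟩, ha ▸ consistent_blockSample_hA⟩, ?_⟩
  rintro ⟨h, hh, hcons⟩
  by_contra hkf
  exact not_consistent_blockSample hk hkf hh hcons

theorem computablePred_mem_range_of_isERM {f : ℕ → ℕ} {A : Learner} (hAc : ComputableLearner A)
    (hERM : IsERM A (Hf f)) : ComputablePred (· ∈ Set.range f) := by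
  have hconsistent :
      Computable fun k => (blockSample k).all fun p => A (blockSample k) p.1 == p.2 :=
    Computable.list_all primrec_blockSample.to_comp
      (Primrec.beq.to_comp.comp (hAc.comp (primrec_blockSample.to_comp.comp Computable.fst)
        (Computable.fst.comp Computable.snd)) (Computable.snd.comp Computable.snd))
  refine ComputablePred.of_bool_iff_of_pos hconsistent fun k hk => ?_
  rw [← consistent_iff_all_beq, hERM.consistent_iff, mem_range_iff_exists_consistent_blockSample hk]

theorem computablePred_mem_range_of_properlySCPACLearnable {f : ℕ → ℕ}
    (hf : ProperlySCPACLearnable (Hf f)) : ComputablePred (· ∈ Set.range f) := by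
  obtain ⟨A, hAc, hproper, hPAC, g, hg, hgA⟩ := hf
  have hsamples : Computable fun k => tuples (g (k + 1)) (blockSample k) :=
    primrec₂_tuples.to_comp.comp (hg.comp Computable.succ) primrec_blockSample.to_comp
  have hconsistent : Computable₂ fun k (S : Sample) =>
      (blockSample k).all fun p => A S p.1 == p.2 :=
    Computable.list_all (primrec_blockSample.to_comp.comp Computable.fst)
      (Primrec.beq.to_comp.comp (hAc.comp (Computable.snd.comp Computable.fst)
        (Computable.fst.comp Computable.snd)) (Computable.snd.comp Computable.snd))
  refine ComputablePred.of_bool_iff_of_pos (Computable.list_any hsamples hconsistent) fun k hk => ?_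
  rw [mem_range_iff_exists_consistent_blockSample hk,
    hproper.exists_consistent_iff (hPAC.pacCondition (hgA (k + 1))) (blockSample_ne_nil hk)
      (by rw [length_blockSample]; omega)]
  simp only [consistent_iff_all_beq, List.any_eq_true]

theorem Hf_computable_ERM_implies_range_decidable_general (f : ℕ → ℕ) :
    ((∃ A : Learner, ComputableLearner A ∧ IsERM A (Hf f)) →
      ComputablePred (fun n => n ∈ Set.range f)) ∧
    (¬ ComputablePred (fun n => n ∈ Set.range f) →
      ¬ ProperlySCPACLearnable (Hf f)) :=
  ⟨fun ⟨_, hAc, hERM⟩ => computablePred_mem_range_of_isERM hAc hERM,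
    fun hundec hlearn => hundec (computablePred_mem_range_of_properlySCPACLearnable hlearn)⟩

/-- For a total computable injective `f : ℕ → ℕ`: if the class `𝓗_f`
has a computable ERM, then the range of `f` is a decidable subset of `ℕ`. Consequently,
if the range of `f` is undecidable, then `𝓗_f` is not properly SCPAC learnable. -/
theorem Hf_computable_ERM_implies_range_decidable (f : ℕ → ℕ) (hf : Computable f)
    (hinj : Function.Injective f) :
    ((∃ A : Learner, ComputableLearner A ∧ IsERM A (Hf f)) →
      ComputablePred (fun n => n ∈ Set.range f)) ∧
    (¬ ComputablePred (fun n => n ∈ Set.range f) →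
      ¬ ProperlySCPACLearnable (Hf f)) :=
  Hf_computable_ERM_implies_range_decidable_general f
end
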